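/- For n ≥ 1 and subspaces A, B, C₁, ..., Cₙ of a finite-dimensional vector space V, (n-1)·I(A;B) ≤ Σ_{i=1}^{n} I(A;B|C_i) + (Σ_{i=1}^{n} dim C_i) - dim(C₁ + C₂ + ⋯ + Cₙ), where I(X;Y) = dim X + dim Y - dim(X+Y) and I(X;Y|T) = dim(X+T) + dim(Y+T) - dim(X+Y+T) - dim T. -/

import Mathlib

/-! With `Z = A ⊓ B` we have `I(A;B) = dim Z` and, by submodularity of `dim` applied to
`Z + Cᵢ ≤ (A + Cᵢ) ⊓ (B + Cᵢ)`, `I(A;B|Cᵢ) ≥ dim (Z + Cᵢ) - dim Cᵢ`. Submodularity again, by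
induction on the number of subspaces, gives `∑ dim (Z + Cᵢ) ≥ (n - 1) dim Z + dim (Z + ∑ Cᵢ)`,
and `dim (Z + ∑ Cᵢ) ≥ dim (∑ Cᵢ)`. -/

open Module

noncomputable def condH {F V : Type*} [Field F] [AddCommGroup V] [Module F V]
    (X Y : Submodule F V) : ℤ :=
  (finrank F ↑(X ⊔ Y) : ℤ) - finrank F ↑Y

noncomputable def mutI {F V : Type*} [Field F] [AddCommGroup V] [Module F V]
    (X Y : Submodule F V) : ℤ :=
  (finrank F ↑X : ℤ) + finrank F ↑Y - finrank F ↑(X ⊔ Y)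

noncomputable def condI {F V : Type*} [Field F] [AddCommGroup V] [Module F V]
    (X Y T : Submodule F V) : ℤ :=
  (finrank F ↑(X ⊔ T) : ℤ) + finrank F ↑(Y ⊔ T) - finrank F ↑(X ⊔ Y ⊔ T) - finrank F ↑T

section Submodularity

variable {F V : Type*} [Field F] [AddCommGroup V] [Module F V] [FiniteDimensional F V]

theorem Submodule.finrank_add_finrank_sup_le {Z X Y : Submodule F V} (hX : Z ≤ X) (hY : Z ≤ Y) :
    finrank F Z + finrank F ↑(X ⊔ Y) ≤ finrank F X + finrank F Y := by
  have hZ : finrank F Z ≤ finrank F ↑(X ⊓ Y) := Submodule.finrank_mono (le_inf hX hY)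
  have := Submodule.finrank_sup_add_finrank_inf_eq X Y
  omega

theorem mutI_eq_finrank_inf (A B : Submodule F V) : mutI A B = finrank F ↑(A ⊓ B) := by
  have := Submodule.finrank_sup_add_finrank_inf_eq A B
  unfold mutI
  omega

theorem finrank_inf_sup_sub_finrank_le_condI (A B C : Submodule F V) :
    (finrank F ↑(A ⊓ B ⊔ C) : ℤ) - finrank F C ≤ condI A B C := by
  have h := Submodule.finrank_add_finrank_sup_le (Z := A ⊓ B ⊔ C) (X := A ⊔ C) (Y := B ⊔ C)
    (sup_le_sup_right inf_le_left C) (sup_le_sup_right inf_le_right C)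
  rw [sup_sup_sup_comm, sup_idem] at h
  unfold condI
  omega

theorem Submodule.card_sub_one_mul_finrank_add_finrank_sup_le_sum {ι : Type*}
    (Z : Submodule F V) (C : ι → Submodule F V) (s : Finset ι) :
    ((s.card : ℤ) - 1) * finrank F Z + finrank F ↑(Z ⊔ s.sup C) ≤
      ∑ i ∈ s, (finrank F ↑(Z ⊔ C i) : ℤ) := by
  induction s using Finset.cons_induction with
  | empty => rw [Finset.sup_empty, sup_bot_eq]; simp
  | cons i s hi ih =>
    have h := Submodule.finrank_add_finrank_sup_le (Z := Z) (X := Z ⊔ C i) (Y := Z ⊔ s.sup C)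
      le_sup_left le_sup_left
    rw [sup_sup_sup_comm, sup_idem] at h
    rw [Finset.sum_cons, Finset.sup_cons, Finset.card_cons]
    push_cast
    linarith

end Submodularity

theorem stmt12_general {F V : Type*} [Field F] [AddCommGroup V] [Module F V] [FiniteDimensional F V]
    (n : ℕ) (A B : Submodule F V) (C : ℕ → Submodule F V) :
    ((n : ℤ) - 1) * mutI A B ≤
      (∑ i ∈ Finset.Icc 1 n, condI A B (C i)) +
        (∑ i ∈ Finset.Icc 1 n, (finrank F ↑(C i) : ℤ)) -
          (finrank F ↑((Finset.Icc 1 n).sup C) : ℤ) := by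
  have hcondI := Finset.sum_le_sum fun i (_ : i ∈ Finset.Icc 1 n) =>
    finrank_inf_sup_sub_finrank_le_condI A B (C i)
  have hsum := Submodule.card_sub_one_mul_finrank_add_finrank_sup_le_sum (A ⊓ B) C
    (Finset.Icc 1 n)
  have hsup : (finrank F ↑((Finset.Icc 1 n).sup C) : ℤ) ≤
      finrank F ↑(A ⊓ B ⊔ (Finset.Icc 1 n).sup C) :=
    mod_cast Submodule.finrank_mono le_sup_right
  rw [Finset.sum_sub_distrib] at hcondI
  rw [Nat.card_Icc, Nat.add_sub_cancel] at hsum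
  rw [mutI_eq_finrank_inf]
  linarith

theorem stmt12 {F V : Type*} [Field F] [AddCommGroup V] [Module F V] [FiniteDimensional F V]
    (n : ℕ) (hn : 1 ≤ n) (A B : Submodule F V) (C : ℕ → Submodule F V) :
    ((n : ℤ) - 1) * mutI A B ≤
      (∑ i ∈ Finset.Icc 1 n, condI A B (C i)) +
        (∑ i ∈ Finset.Icc 1 n, (finrank F ↑(C i) : ℤ)) -
          (finrank F ↑((Finset.Icc 1 n).sup C) : ℤ) :=
  stmt12_general n A B C
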